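/- Let N, M ≥ 1, let G : ℝ × ℝ^N → ℝ^N satisfy ‖G(t,y) − G(t,z)‖ ≤ L‖y − z‖ for all t, y, z, fix nodes t⁰,...,t^M ∈ ℝ and weights θ^m_j ∈ ℝ (1 ≤ m ≤ M, 0 ≤ j ≤ M), Δt > 0, y⁰ ∈ ℝ^N, and set Θ := max_{1≤m≤M} Σ_{j=0}^{M} |θ^m_j|. Suppose y⁰_*, y¹_*, ..., y^M_* satisfy the implicit system y⁰_* = y⁰ and y^m_* = y⁰ + Δt·Σ_{j=0}^{M} θ^m_j·G(t^j, y^j_*) for all 1 ≤ m ≤ M. Given any vectors y^{0,old} = y⁰, y^{1,old}, ..., y^{M,old}, define the DeC update y^{m,new} := y⁰ + Δt·Σ_{j=0}^{M} θ^m_j·G(t^j, y^{j,old}) for 1 ≤ m ≤ M, and y^{0,new} := y⁰. Then max_{0≤m≤M} ‖y^{m,new} − y^m_*‖ ≤ Δt·L·Θ·max_{0≤j≤M} ‖y^{j,old} − y^j_*‖; that is, each explicit DeC iteration contracts the error towards the solution of the implicit discretization by a factor proportional to Δt. -/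
import Mathlib


/-- **Contractivity of the explicit DeC iteration.** Let `G : ℝ × ℝ^N → ℝ^N` be
`L`-Lipschitz in its second argument, fix nodes `t⁰,...,t^M`, weights `θ^m_j`,
`Δt > 0`, `y⁰`, and let `Θ` bound `Σ_j |θ^m_j|` for every `1 ≤ m ≤ M`. If
`y⁰_*,...,y^M_*` solves the implicit system `y⁰_* = y⁰`,
`y^m_* = y⁰ + Δt·Σ_j θ^m_j·G(t^j, y^j_*)`, and the old iterates satisfy
`y^{0,old} = y⁰` and `‖y^{j,old} − y^j_*‖ ≤ D` for all `j`, then the DeC update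
`y^{m,new} := y⁰ + Δt·Σ_j θ^m_j·G(t^j, y^{j,old})` (`m ≥ 1`), `y^{0,new} := y⁰`,
satisfies `‖y^{m,new} − y^m_*‖ ≤ Δt·L·Θ·D` for every `m`. -/
theorem dec_iteration_contracts (N M : ℕ) (hN : 1 ≤ N) (hM : 1 ≤ M) (L : ℝ)
    (G : ℝ → EuclideanSpace ℝ (Fin N) → EuclideanSpace ℝ (Fin N))
    (hG : ∀ (t : ℝ) (y z : EuclideanSpace ℝ (Fin N)), ‖G t y - G t z‖ ≤ L * ‖y - z‖)
    (t : Fin (M + 1) → ℝ) (θ : Fin (M + 1) → Fin (M + 1) → ℝ)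
    (Δt : ℝ) (hΔt : 0 < Δt) (y₀ : EuclideanSpace ℝ (Fin N))
    (Θ : ℝ) (hΘ : ∀ m : Fin (M + 1), m ≠ 0 → ∑ j : Fin (M + 1), |θ m j| ≤ Θ)
    (ystar yold : Fin (M + 1) → EuclideanSpace ℝ (Fin N))
    (hstar0 : ystar 0 = y₀)
    (hstar : ∀ m : Fin (M + 1), m ≠ 0 →
      ystar m = y₀ + Δt • ∑ j : Fin (M + 1), θ m j • G (t j) (ystar j))
    (hold0 : yold 0 = y₀)
    (D : ℝ) (hD : ∀ j : Fin (M + 1), ‖yold j - ystar j‖ ≤ D) :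
    ∀ m : Fin (M + 1),
      ‖(if m = 0 then y₀ else
          y₀ + Δt • ∑ j : Fin (M + 1), θ m j • G (t j) (yold j)) - ystar m‖
        ≤ Δt * L * Θ * D := by

  -- nonnegativity facts
  have hD0 : 0 ≤ D := le_trans (norm_nonneg _) (hD 0)
  have hL0 : 0 ≤ L := by
    have h := hG 0 (EuclideanSpace.single (⟨0, hN⟩ : Fin N) (1:ℝ))
      (0 : EuclideanSpace ℝ (Fin N))
    rw [sub_zero] at h
    have hn : ‖EuclideanSpace.single (⟨0, hN⟩ : Fin N) (1:ℝ)‖ = 1 := by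
      simp [EuclideanSpace.norm_single]
    rw [hn, mul_one] at h
    exact le_trans (norm_nonneg _) h
  have hm1 : (⟨1, by omega⟩ : Fin (M+1)) ≠ 0 := by
    simp [Fin.ext_iff]
  have hΘ0 : 0 ≤ Θ :=
    le_trans (Finset.sum_nonneg fun j _ => abs_nonneg _) (hΘ _ hm1)
  intro m
  by_cases hm : m = 0
  · subst hm
    rw [if_pos rfl, hstar0, sub_self, norm_zero]
    positivity
  · simp only [if_neg hm]
    rw [hstar m hm]
    have key : (y₀ + Δt • ∑ j : Fin (M + 1), θ m j • G (t j) (yold j)) -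
        (y₀ + Δt • ∑ j : Fin (M + 1), θ m j • G (t j) (ystar j)) =
        Δt • ∑ j : Fin (M + 1), θ m j • (G (t j) (yold j) - G (t j) (ystar j)) := by
      rw [add_sub_add_left_eq_sub, ← smul_sub, ← Finset.sum_sub_distrib]
      simp [smul_sub]
    rw [key, norm_smul, Real.norm_eq_abs, abs_of_pos hΔt]
    have hsum : ‖∑ j : Fin (M + 1), θ m j • (G (t j) (yold j) - G (t j) (ystar j))‖
        ≤ Θ * (L * D) := by
      calc ‖∑ j : Fin (M + 1), θ m j • (G (t j) (yold j) - G (t j) (ystar j))‖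
          ≤ ∑ j : Fin (M + 1), ‖θ m j • (G (t j) (yold j) - G (t j) (ystar j))‖ :=
            norm_sum_le _ _
        _ ≤ ∑ j : Fin (M + 1), |θ m j| * (L * D) := by
            apply Finset.sum_le_sum
            intro j _
            rw [norm_smul, Real.norm_eq_abs]
            apply mul_le_mul_of_nonneg_left _ (abs_nonneg _)
            calc ‖G (t j) (yold j) - G (t j) (ystar j)‖ ≤ L * ‖yold j - ystar j‖ :=
                  hG _ _ _
              _ ≤ L * D := mul_le_mul_of_nonneg_left (hD j) hL0
        _ = (∑ j : Fin (M + 1), |θ m j|) * (L * D) := by rw [Finset.sum_mul]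
        _ ≤ Θ * (L * D) := mul_le_mul_of_nonneg_right (hΘ m hm) (by positivity)
    calc Δt * ‖∑ j : Fin (M + 1), θ m j • (G (t j) (yold j) - G (t j) (ystar j))‖
        ≤ Δt * (Θ * (L * D)) := mul_le_mul_of_nonneg_left hsum hΔt.le
      _ = Δt * L * Θ * D := by ring
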